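/- arXiv:2306.13718 — 3 statements merged into one kernel-verified Lean document; each statement's English description precedes it below -/
import Mathlib

section
/- Under the hypotheses: p prime, F : F_{p^n} → F_{p^n}, β, γ ∈ F_{p^n} nonzero with Tr(β(F(x+γ)-F(x))) = 0 for all x, α ∈ F_{p^n} with Tr(αγ) = -2 (so in particular Tr(αγ) ≠ -1), and H(x) = x + γ·Tr(αx + βF(x)): the functions F and F∘H are CCZ-equivalent; explicitly, the F_p-linear bijection 𝓛(x,y) = (x + γ·Tr(αx + βy), y) of F_{p^n} × F_{p^n} maps the graph {(x, F(x)) : x ∈ F_{p^n}} onto the graph {(x, (F∘H)(x)) : x ∈ F_{p^n}}. -/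
/-!
Write `T` for the trace. Both `𝓛` and `H` have the shape `x ↦ x + φ x • v` where `φ` is a
linear functional with `φ v = T (α γ) = -2` plus a term invariant under translation by
multiples of `v` (for `H` this is `T (β F x)`, which is `γ`-periodic by hypothesis). Hence
`φ (x + φ x • v) = φ x - 2 φ x = -φ x`, so both maps are involutions. An involution is bijective,
and `𝓛 (x, F x) = (H x, F x)`, so the image of the graph of `F` is
`{(H x, F x)} = {(u, F (H u))}`, the graph of `F ∘ H`.
-/

open Function

theorem Function.Periodic.zmod_smul {M β : Type*} [AddCommGroup M] {n : ℕ} [Module (ZMod n) M]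
    {f : M → β} {v : M} (h : Periodic f v) (c : ZMod n) : Periodic f (c • v) := by
  rw [← ZMod.intCast_zmod_cast c, Int.cast_smul_eq_zsmul]
  exact h.zsmul _

section Transvection

variable {R M : Type*} [Ring R] [AddCommGroup M] [Module R M]

theorem involutive_add_smul_of_apply_add_smul_eq_neg {φ : M → R} {v : M}
    (h : ∀ x, φ (x + φ x • v) = -φ x) : Involutive fun x => x + φ x • v := by
  intro x
  simp only [h, add_assoc, ← add_smul, add_neg_cancel, zero_smul, add_zero]

theorem involutive_add_smul_of_apply_eq_neg_two (ℓ : M →ₗ[R] R) {v : M} (hv : ℓ v = -2)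
    (g : M → R) (hg : ∀ (t : R) x, g (x + t • v) = g x) :
    Involutive fun x => x + (ℓ x + g x) • v := by
  refine involutive_add_smul_of_apply_add_smul_eq_neg fun x => ?_
  rw [hg, map_add, map_smul, hv, smul_eq_mul]
  noncomm_ring

end Transvection

theorem Function.Involutive.range_prod_mk {X Y : Type*} {H : X → X} (hH : Involutive H)
    (F : X → Y) : Set.range (fun x => (H x, F x)) = {q | q.2 = F (H q.1)} := by
  ext ⟨u, w⟩
  constructor
  · rintro ⟨x, hx⟩
    simp only [Prod.mk.injEq] at hx
    simp [← hx.1, ← hx.2, hH x]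
  · intro hw
    exact ⟨H u, by simp_all [hH u]⟩

theorem twist_CCZ_equiv_general
    (p n : ℕ) [Fact p.Prime]
    (F : GaloisField p n → GaloisField p n)
    (α β γ : GaloisField p n)
    (hls : ∀ x, Algebra.trace (ZMod p) (GaloisField p n) (β * (F (x + γ) - F x)) = 0)
    (hα : Algebra.trace (ZMod p) (GaloisField p n) (α * γ) = -2) :
    Function.Bijective
      (fun q : GaloisField p n × GaloisField p n =>
        (q.1 + Algebra.trace (ZMod p) (GaloisField p n) (α * q.1 + β * q.2) • γ, q.2))
    ∧ (fun q : GaloisField p n × GaloisField p n =>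
        (q.1 + Algebra.trace (ZMod p) (GaloisField p n) (α * q.1 + β * q.2) • γ, q.2)) ''
        {q : GaloisField p n × GaloisField p n | q.2 = F q.1}
      = {q : GaloisField p n × GaloisField p n |
          q.2 = F ((fun y => y + Algebra.trace (ZMod p) (GaloisField p n) (α * y + β * F y) • γ) q.1)} := by
  set T := Algebra.trace (ZMod p) (GaloisField p n)
  set ℓ := T.comp (LinearMap.mulLeft (ZMod p) α)
  have hperiodic : Periodic (fun x => T (β * F x)) γ := fun x => by
    simpa [mul_sub, sub_eq_zero] using hls x
  have hH : Involutive fun x => x + T (α * x + β * F x) • γ := by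
    simpa [ℓ, map_add] using involutive_add_smul_of_apply_eq_neg_two ℓ hα _
      fun t x => hperiodic.zmod_smul t x
  have hL : Involutive fun q : GaloisField p n × GaloisField p n =>
      (q.1 + T (α * q.1 + β * q.2) • γ, q.2) := by
    have := involutive_add_smul_of_apply_eq_neg_two (ℓ.comp (LinearMap.fst _ _ _)) (v := (γ, 0))
      hα (fun q => T (β * q.2)) fun t q => by simp
    convert this using 2 with q
    ext <;> simp [ℓ, map_add]
  refine ⟨hL.bijective, ?_⟩
  rw [← hH.range_prod_mk F]
  ext q
  simp

/-- Under the linear-structure hypotheses, the linear bijection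
`𝓛(x,y) = (x + γ·Tr(αx+βy), y)` maps the graph of `F` onto the graph of `F ∘ H`,
so `F` and `F ∘ H` are CCZ-equivalent. -/
theorem twist_CCZ_equiv
    (p n : ℕ) [Fact p.Prime]
    (F : GaloisField p n → GaloisField p n)
    (α β γ : GaloisField p n) (hγ : γ ≠ 0) (hβ : β ≠ 0)
    (hls : ∀ x, Algebra.trace (ZMod p) (GaloisField p n) (β * (F (x + γ) - F x)) = 0)
    (hα : Algebra.trace (ZMod p) (GaloisField p n) (α * γ) = -2) :
    Function.Bijective
      (fun q : GaloisField p n × GaloisField p n =>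
        (q.1 + Algebra.trace (ZMod p) (GaloisField p n) (α * q.1 + β * q.2) • γ, q.2))
    ∧ (fun q : GaloisField p n × GaloisField p n =>
        (q.1 + Algebra.trace (ZMod p) (GaloisField p n) (α * q.1 + β * q.2) • γ, q.2)) ''
        {q : GaloisField p n × GaloisField p n | q.2 = F q.1}
      = {q : GaloisField p n × GaloisField p n |
          q.2 = F ((fun y => y + Algebra.trace (ZMod p) (GaloisField p n) (α * y + β * F y) • γ) q.1)} :=
  twist_CCZ_equiv_general p n F α β γ hls hα
end

section
/- Let p be an odd prime, F : F_{p^n} → F_{p^n} quadratic, β ∈ F_{p^n}, and F₄(x) = Tr(βF(x))², viewed as an F_p-valued function. Then for any γ, γ₁, γ₂, γ₃ ∈ F_{p^n}: (1/2)·D_{γ₃}D_{γ₂}D_{γ₁}D_γ F₄(x) = Tr(βL_{γ₂}(γ₃))Tr(βL_γ(γ₁)) + Tr(βL_{γ₁}(γ₃))Tr(βL_γ(γ₂)) + Tr(βL_{γ₁}(γ₂))Tr(βL_γ(γ₃)), independently of x, where L_δ(x) = F(x+δ) - F(x) - F(δ) + F(0). -/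
/-- Discrete derivative. -/
def DD {V W : Type*} [AddCommGroup V] [AddCommGroup W] (δ : V) (G : V → W) : V → W :=
  fun x => G (x + δ) - G x

/-- A function has algebraic degree at most `d` iff all `(d+1)`-fold discrete
derivatives vanish identically. -/
def degLE {V W : Type*} [AddCommGroup V] [AddCommGroup W] : (V → W) → ℕ → Prop
  | F, 0 => ∀ γ x, F (x + γ) - F x = 0
  | F, (d + 1) => ∀ γ, degLE (fun x => F (x + γ) - F x) d

/-!
A quadratic map `f` satisfies `f (x + a + b) = f (x + a) + f (x + b) - f x + B(a, b)` with `B` its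
polar form. Expanding the fourfold derivative of `f ^ 2` with this rule reduces every value of `f`
to values at `x`, `x + γᵢ` and polar terms, and the resulting polynomial identity leaves exactly
twice the sum over the three pairings of `{γ, γ₁, γ₂, γ₃}` of products of polar forms.
-/

variable {V W W' R : Type*} [AddCommGroup V] [AddCommGroup W] [AddCommGroup W'] [CommRing R]

/-- The paper's `L_a(b)`. -/
def polar (F : V → W) (a b : V) : W := F (a + b) - F a - (F b - F 0)

theorem polar_comm (F : V → W) (a b : V) : polar F a b = polar F b a := by
  simp only [polar, add_comm a b]
  abel

theorem polar_comp (φ : W →+ W') (F : V → W) (a b : V) : polar (φ ∘ F) a b = φ (polar F a b) := by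
  simp only [polar, Function.comp_apply, map_sub]

theorem apply_add_add_of_degLE_two {F : V → W} (hF : degLE F 2) (x a b : V) :
    F (x + a + b) = F (x + a) + F (x + b) - F x + polar F a b := by
  have h := hF b a x 0
  simp only [zero_add] at h
  simp only [polar]
  rw [← sub_eq_zero, ← h]
  abel

theorem degLE_two_comp (φ : W →+ W') {F : V → W} (hF : degLE F 2) : degLE (φ ∘ F) 2 := by
  intro a b c x
  simpa only [Function.comp_apply, map_sub, map_zero] using congrArg φ (hF a b c x)

theorem DD_four_sq_of_degLE_two {f : V → R} (hf : degLE f 2) (γ γ₁ γ₂ γ₃ x : V) :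
    DD γ₃ (DD γ₂ (DD γ₁ (DD γ (fun y => f y ^ 2)))) x
      = 2 * (polar f γ₃ γ₂ * polar f γ₁ γ + polar f γ₃ γ₁ * polar f γ₂ γ
        + polar f γ₂ γ₁ * polar f γ₃ γ) := by
  simp only [DD, apply_add_add_of_degLE_two hf]
  rw [polar_comm f γ₃ γ₂, polar_comm f γ₁ γ, polar_comm f γ₃ γ₁, polar_comm f γ₂ γ,
    polar_comm f γ₂ γ₁, polar_comm f γ₃ γ]
  ring

/-- Fourth derivative of `F₄(x) = Tr(βF(x))²` for quadratic `F` over odd characteristic. -/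
theorem fourth_derivative_of_F4
    (p n : ℕ) [Fact p.Prime] (hp : p ≠ 2)
    (F : GaloisField p n → GaloisField p n)
    (hquad : degLE F 2 ∧ ¬ degLE F 1)
    (β : GaloisField p n) :
    ∀ γ γ₁ γ₂ γ₃ x : GaloisField p n,
      (2 : ZMod p)⁻¹ *
        DD γ₃ (DD γ₂ (DD γ₁ (DD γ
          (fun y => (Algebra.trace (ZMod p) (GaloisField p n) (β * F y)) ^ 2)))) x
      = Algebra.trace (ZMod p) (GaloisField p n) (β * (F (γ₃ + γ₂) - F γ₃ - (F γ₂ - F 0)))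
          * Algebra.trace (ZMod p) (GaloisField p n) (β * (F (γ₁ + γ) - F γ₁ - (F γ - F 0)))
        + Algebra.trace (ZMod p) (GaloisField p n) (β * (F (γ₃ + γ₁) - F γ₃ - (F γ₁ - F 0)))
          * Algebra.trace (ZMod p) (GaloisField p n) (β * (F (γ₂ + γ) - F γ₂ - (F γ - F 0)))
        + Algebra.trace (ZMod p) (GaloisField p n) (β * (F (γ₂ + γ₁) - F γ₂ - (F γ₁ - F 0)))
          * Algebra.trace (ZMod p) (GaloisField p n) (β * (F (γ₃ + γ) - F γ₃ - (F γ - F 0))) := by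
  intro γ γ₁ γ₂ γ₃ x
  let φ : GaloisField p n →+ ZMod p :=
    (Algebra.trace (ZMod p) (GaloisField p n)).toAddMonoidHom.comp (AddMonoidHom.mulLeft β)
  have two_ne_zero : (2 : ZMod p) ≠ 0 := Ring.two_ne_zero (by rwa [ZMod.ringChar_zmod_n])
  have hpolar (a b : GaloisField p n) :
      Algebra.trace (ZMod p) (GaloisField p n) (β * (F (a + b) - F a - (F b - F 0)))
        = polar (φ ∘ F) a b :=
    (polar_comp φ F a b).symm
  simp only [hpolar]
  change (2 : ZMod p)⁻¹ * DD γ₃ (DD γ₂ (DD γ₁ (DD γ (fun y => (φ ∘ F) y ^ 2)))) x = _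
  rw [DD_four_sq_of_degLE_two (degLE_two_comp φ hquad.1), inv_mul_cancel_left₀ two_ne_zero]
end

section
/- Let n ≥ 4, i with gcd(i,n)=1, and consider the Gold function G(x) = x^{2^i+1} on F_{2^n}. Let F(x) = x^{2^i+1} + x and ε(x) = Tr(x^{2^i+1} + x). Then the function F∘H(x) = x^{2^i+1} + x + ε(x)·(x^{2^i} + x), with H(x) = x + ε(x), is CCZ-equivalent to G. Moreover F∘H has algebraic degree 3, hence is not EA-equivalent to G (which has degree 2). -/
/-- An `F_p`-affine map. -/
def IsAffineMap (R : Type*) {V W : Type*} [CommSemiring R] [AddCommGroup V] [AddCommGroup W]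
    [Module R V] [Module R W] (A : V → W) : Prop :=
  ∃ (L : V →ₗ[R] W) (c : W), ∀ x, A x = L x + c

/-- EA-equivalence of `(n,n)`-functions. -/
def EAequiv (p n : ℕ) [Fact p.Prime]
    (F F' : GaloisField p n → GaloisField p n) : Prop :=
  ∃ A₁ A₂ A₃ : GaloisField p n → GaloisField p n,
    IsAffineMap (ZMod p) A₁ ∧ Function.Bijective A₁ ∧
    IsAffineMap (ZMod p) A₂ ∧ Function.Bijective A₂ ∧
    IsAffineMap (ZMod p) A₃ ∧
    ∀ x, F' x = A₁ (F (A₂ x)) + A₃ x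

/-- CCZ-equivalence: an affine bijection of the product space maps the graph of `F`
onto the graph of `F'`. -/
def CCZequiv (p n : ℕ) [Fact p.Prime]
    (F F' : GaloisField p n → GaloisField p n) : Prop :=
  ∃ (L : (GaloisField p n × GaloisField p n) →ₗ[ZMod p] (GaloisField p n × GaloisField p n))
    (c : GaloisField p n × GaloisField p n),
    Function.Bijective (fun q => L q + c) ∧
    (fun q => L q + c) '' {q : GaloisField p n × GaloisField p n | q.2 = F q.1}
      = {q : GaloisField p n × GaloisField p n | q.2 = F' q.1}

/-!
`F x = x ^ (2 ^ i + 1) + x` differs from the Gold function `G` by a linear map, and `1` is a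
linear structure of `ε = Tr ∘ F`: `F (x + 1) = F x + x ^ (2 ^ i) + x` and `Tr (x ^ (2 ^ i)) = Tr x`.
Hence the transvection `(x, y) ↦ (x + Tr y, y)` maps the graph of `F` onto that of `F ∘ H`,
`H x = x + ε x`, and composing with `(x, y) ↦ (x, y + x)` makes `F ∘ H` CCZ-equivalent to `G`.

`F ∘ H = F + ε • M` with `M x = x ^ (2 ^ i) + x` additive and `ε` quadratic, so its degree is at
most 3. If it were at most 2, the third derivative of `ε • M` would vanish:
`B b c • M a + B a c • M b + B a b • M c = 0`, `B` the polar form of `ε`. Choosing `B a b = 1`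
(possible since `n ∤ 2 i`) puts the image of `M` in the span of `M a` and `M b`, while `M` has
kernel `{0, 1}` by `gcd (i, n) = 1`; rank–nullity then forces `n ≤ 3`. Finally EA-equivalence
preserves degree `≤ 2`, so `F ∘ H` is not EA-equivalent to `G`.
-/

section DegreeCalculus

variable {V W : Type*} [AddCommGroup V] [AddCommGroup W]

def discreteDeriv (γ : V) (F : V → W) : V → W := fun x => F (x + γ) - F x

theorem degLE_succ_iff {F : V → W} {d : ℕ} :
    degLE F (d + 1) ↔ ∀ γ, degLE (discreteDeriv γ F) d := Iff.rfl

theorem degLE_zero_iff {F : V → W} : degLE F 0 ↔ ∀ x, F x = F 0 := by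
  refine ⟨fun h x => by simpa [sub_eq_zero] using h x 0, fun h γ x => ?_⟩
  rw [h (x + γ), h x, sub_self]

theorem degLE_const (w : W) (d : ℕ) : degLE (fun _ : V => w) d := by
  induction d generalizing w with
  | zero => exact degLE_zero_iff.2 fun _ => rfl
  | succ d ih => exact fun _ => by simpa [discreteDeriv] using ih 0

theorem degLE.succ {F : V → W} {d : ℕ} (h : degLE F d) : degLE F (d + 1) := by
  induction d generalizing F with
  | zero => exact fun γ => by simpa [discreteDeriv, sub_eq_zero.1 (h γ _)] using degLE_const 0 0
  | succ d ih => exact fun γ => ih (h γ)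

theorem degLE.mono {F : V → W} {d e : ℕ} (h : degLE F d) (hde : d ≤ e) : degLE F e := by
  induction e, hde using Nat.le_induction with
  | base => exact h
  | succ e _ ih => exact ih.succ

theorem degLE.map {W' : Type*} [AddCommGroup W'] (τ : W →+ W') {F : V → W} {d : ℕ}
    (h : degLE F d) : degLE (fun x => τ (F x)) d := by
  induction d generalizing F with
  | zero => exact fun γ x => by rw [← map_sub, h γ x, map_zero]
  | succ d ih => exact fun γ => by simpa [discreteDeriv] using ih (h γ)

theorem degLE.add {F G : V → W} {d : ℕ} (hF : degLE F d) (hG : degLE G d) :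
    degLE (fun x => F x + G x) d := by
  induction d generalizing F G with
  | zero => exact fun γ x => by rw [add_sub_add_comm, hF γ x, hG γ x, add_zero]
  | succ d ih =>
    intro γ
    simpa [discreteDeriv, add_sub_add_comm] using ih (hF γ) (hG γ)

theorem degLE.sub {F G : V → W} {d : ℕ} (hF : degLE F d) (hG : degLE G d) :
    degLE (fun x => F x - G x) d := by
  simpa [sub_eq_add_neg] using hF.add (hG.map negAddMonoidHom)

theorem degLE.comp_affine {V' : Type*} [AddCommGroup V'] {F : V → W} {d : ℕ}
    (h : degLE F d) (L : V' →+ V) (c : V) : degLE (fun x => F (L x + c)) d := by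
  induction d generalizing F with
  | zero => exact fun γ x => by simpa [add_right_comm _ _ c] using h (L γ) (L x + c)
  | succ d ih =>
    intro γ
    simpa [discreteDeriv, add_right_comm _ _ c] using ih (h (L γ))

theorem degLE_addMonoidHom (τ : V →+ W) : degLE τ 1 :=
  fun γ => by simpa [discreteDeriv] using degLE_const (τ γ) 0

theorem discreteDeriv_smul {R : Type*} [Ring R] [Module R W] (γ : V) (ε : V → R) (M : V → W) :
    discreteDeriv γ (fun x => ε x • M x)
      = fun x => discreteDeriv γ ε x • M (x + γ) + ε x • discreteDeriv γ M x := by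
  ext x
  simp only [discreteDeriv, sub_smul, smul_sub]
  abel

theorem degLE.smul {R : Type*} [Ring R] [Module R W] {ε : V → R} {M : V → W} {a b : ℕ}
    (hε : degLE ε a) (hM : degLE M b) : degLE (fun x => ε x • M x) (a + b) := by
  induction a generalizing b ε M with
  | zero =>
    have hconst : (fun x => ε x • M x)
        = fun x => DistribSMul.toAddMonoidHom W (ε 0) (M x) := by
      funext x; rw [degLE_zero_iff.1 hε x]; rfl
    rw [hconst, zero_add]
    exact hM.map _
  | succ a iha =>
    induction b generalizing ε M with
    | zero =>
      have hconst : (fun x => ε x • M x)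
          = fun x => (LinearMap.toSpanSingleton R W (M 0)).toAddMonoidHom (ε x) := by
        funext x; rw [degLE_zero_iff.1 hM x]; rfl
      rw [hconst]
      exact hε.map _
    | succ b ihb =>
      show degLE (fun x => ε x • M x) (a + 1 + b + 1)
      refine degLE_succ_iff.2 fun γ => ?_
      rw [discreteDeriv_smul]
      have hshift := hM.comp_affine (AddMonoidHom.id V) γ
      exact ((iha (hε γ) hshift).mono (by omega)).add (ihb hε (hM γ))

theorem discreteDeriv_three_smul_zero {R : Type*} [CommRing R] [Module R W] (ε : V → R)
    (M : V →+ W) (a b c : V) :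
    discreteDeriv a (discreteDeriv b (discreteDeriv c (fun x => ε x • M x))) 0
      = discreteDeriv b (discreteDeriv c ε) a • M a + discreteDeriv a (discreteDeriv c ε) b • M b
        + discreteDeriv a (discreteDeriv b ε) c • M c := by
  simp only [discreteDeriv, zero_add, map_add, map_zero, add_assoc, add_comm b a, add_comm c a,
    add_comm c b]
  module

end DegreeCalculus

theorem IsAffineMap.degLE_one {R V W : Type*} [CommSemiring R] [AddCommGroup V] [AddCommGroup W]
    [Module R V] [Module R W] {A : V → W} (hA : IsAffineMap R A) : degLE A 1 := by
  obtain ⟨L, c, hA⟩ := hA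
  rw [funext hA]
  exact (degLE_addMonoidHom L.toAddMonoidHom).add (degLE_const c 1)

section Equivalences

variable {p n : ℕ} [Fact p.Prime]

theorem degLE.of_EAequiv {F F' : GaloisField p n → GaloisField p n} {d : ℕ} (hF : degLE F d)
    (h : EAequiv p n F F') (hd : 1 ≤ d) : degLE F' d := by
  obtain ⟨A₁, A₂, A₃, ⟨L₁, c₁, hA₁⟩, -, ⟨L₂, c₂, hA₂⟩, -, hA₃, hF'⟩ := h
  have hFA : degLE (fun x => A₁ (F (A₂ x))) d := by
    simp only [hA₁, hA₂]
    exact ((hF.comp_affine L₂.toAddMonoidHom c₂).map L₁.toAddMonoidHom).add (degLE_const c₁ d)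
  rw [funext hF']
  exact hFA.add (hA₃.degLE_one.mono hd)

theorem CCZequiv.trans {F₁ F₂ F₃ : GaloisField p n → GaloisField p n}
    (h₁₂ : CCZequiv p n F₁ F₂) (h₂₃ : CCZequiv p n F₂ F₃) : CCZequiv p n F₁ F₃ := by
  obtain ⟨L₁, c₁, hbij₁, himg₁⟩ := h₁₂
  obtain ⟨L₂, c₂, hbij₂, himg₂⟩ := h₂₃
  have hcomp : (fun q => (L₂ ∘ₗ L₁) q + (L₂ c₁ + c₂))
      = (fun q => L₂ q + c₂) ∘ (fun q => L₁ q + c₁) := by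
    ext q <;> simp [add_assoc]
  refine ⟨L₂ ∘ₗ L₁, L₂ c₁ + c₂, ?_, ?_⟩
  · rw [hcomp]
    exact hbij₂.comp hbij₁
  · rw [hcomp, Set.image_comp, himg₁, himg₂]

theorem CCZequiv.of_linearEquiv {F F' : GaloisField p n → GaloisField p n}
    (e : (GaloisField p n × GaloisField p n) ≃ₗ[ZMod p] (GaloisField p n × GaloisField p n))
    (hF : ∀ x, (e (x, F x)).2 = F' (e (x, F x)).1)
    (hF' : ∀ y, (e.symm (y, F' y)).2 = F (e.symm (y, F' y)).1) : CCZequiv p n F F' := by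
  refine ⟨e.toLinearMap, 0, by simpa using e.bijective, ?_⟩
  ext ⟨y, z⟩
  simp only [add_zero, LinearEquiv.coe_coe, Set.mem_image, Set.mem_ofPred_eq]
  constructor
  · rintro ⟨⟨x, w⟩, hw, he⟩
    obtain rfl : w = F x := hw
    simpa [he] using hF x
  · rintro rfl
    exact ⟨e.symm (y, F' y), hF' y, e.apply_symm_apply _⟩

theorem CCZequiv_add_linearMap (F : GaloisField p n → GaloisField p n)
    (A : GaloisField p n →ₗ[ZMod p] GaloisField p n) : CCZequiv p n F (fun x => F x + A x) :=
  .of_linearEquiv ((LinearEquiv.refl _ _).skewProd (LinearEquiv.refl _ _) A)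
    (fun x => by simp [LinearEquiv.skewProd_apply])
    (fun y => by simp [LinearEquiv.skewProd_symm_apply])

theorem CCZequiv_comp_sub_smul (F : GaloisField p n → GaloisField p n)
    (t : Module.Dual (ZMod p) (GaloisField p n)) {γ : GaloisField p n}
    (hγ : Function.Periodic (fun x => t (F x)) γ) :
    CCZequiv p n F (fun x => F (x - t (F x) • γ)) := by
  have hγ' : ∀ x (c : ZMod p), t (F (x + c • γ)) = t (F x) := fun x c => by
    rw [← ZMod.natCast_zmod_val c, Nat.cast_smul_eq_nsmul]
    exact hγ.nsmul c.val x
  have hγ'' : ∀ x (c : ZMod p), t (F (x - c • γ)) = t (F x) := fun x c => by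
    rw [sub_eq_add_neg, ← neg_smul, hγ']
  have hv : (t ∘ₗ LinearMap.snd _ _ _) ((γ, 0) : GaloisField p n × GaloisField p n) = 0 := by simp
  refine .of_linearEquiv (LinearEquiv.transvection hv) (fun x => ?_) (fun y => ?_)
  · simp [LinearMap.transvection.apply, hγ']
  · simp [LinearEquiv.transvection.symm_eq, LinearMap.transvection.apply, ← sub_eq_add_neg,
      hγ'']

end Equivalences

namespace FiniteField

open Module

variable (K L : Type*) [Field K] [Fintype K] [Field L] [Finite L] [Algebra K L]

theorem frobeniusAlgEquivOfAlgebraic_apply_eq_self_of_pow {i : ℕ} (hi : i.Coprime (finrank K L))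
    {x : L} (hx : (frobeniusAlgEquivOfAlgebraic K L ^ i) x = x) :
    frobeniusAlgEquivOfAlgebraic K L x = x := by
  have hi' : Function.IsPeriodicPt (frobeniusAlgEquivOfAlgebraic K L) i x := by
    rwa [Function.IsPeriodicPt, Function.IsFixedPt, ← AlgEquiv.coe_pow]
  have hn : Function.IsPeriodicPt (frobeniusAlgEquivOfAlgebraic K L) (finrank K L) x := by
    rw [Function.IsPeriodicPt, Function.IsFixedPt, ← AlgEquiv.coe_pow,
      ← orderOf_frobeniusAlgEquivOfAlgebraic, pow_orderOf_eq_one, AlgEquiv.one_apply]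
  simpa [hi] using (hi'.gcd hn).eq

theorem exists_frobeniusAlgEquivOfAlgebraic_pow_apply_ne {k : ℕ} (hk : ¬ finrank K L ∣ k) :
    ∃ x : L, (frobeniusAlgEquivOfAlgebraic K L ^ k) x ≠ x := by
  by_contra! h
  rw [← orderOf_frobeniusAlgEquivOfAlgebraic] at hk
  exact hk (orderOf_dvd_of_pow_eq_one (AlgEquiv.ext h))

variable {K L} in
theorem frobeniusAlgEquivOfAlgebraic_pow_apply {p : ℕ} [Fact p.Prime] [Algebra (ZMod p) L]
    (i : ℕ) (x : L) :
    (frobeniusAlgEquivOfAlgebraic (ZMod p) L ^ i) x = x ^ p ^ i := by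
  rw [AlgEquiv.coe_pow, coe_frobeniusAlgEquivOfAlgebraic_iterate, ZMod.card]

end FiniteField

theorem trace_pow_prime_pow {p : ℕ} [Fact p.Prime] {L : Type*} [Field L] [Finite L]
    [Algebra (ZMod p) L] (i : ℕ) (x : L) :
    Algebra.trace (ZMod p) L (x ^ p ^ i) = Algebra.trace (ZMod p) L x := by
  rw [← FiniteField.frobeniusAlgEquivOfAlgebraic_pow_apply, Algebra.trace_eq_of_algEquiv]

theorem LinearMap.finrank_le_of_range_le_span_of_ker_le_span {F V W : Type*} [DivisionRing F]
    [AddCommGroup V] [Module F V] [FiniteDimensional F V] [AddCommGroup W] [Module F W]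
    (f : V →ₗ[F] W) {s : Finset W} {t : Finset V} (hs : range f ≤ Submodule.span F (s : Set W))
    (ht : ker f ≤ Submodule.span F (t : Set V)) : Module.finrank F V ≤ s.card + t.card := by
  rw [← f.finrank_range_add_finrank_ker]
  exact add_le_add ((Submodule.finrank_mono hs).trans (finrank_span_finset_le_card s))
    ((Submodule.finrank_mono ht).trans (finrank_span_finset_le_card t))

section Gold

variable {R : Type*} [CommRing R] (p : ℕ) [ExpChar R p] (i : ℕ)

theorem degLE_gold : degLE (fun x : R => x ^ (p ^ i + 1)) 2 := by
  have h := (degLE_addMonoidHom (iterateFrobenius R p i).toAddMonoidHom).smul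
    (degLE_addMonoidHom (AddMonoidHom.id R))
  simpa [iterateFrobenius_def, pow_succ] using h

theorem degLE_gold_add_self : degLE (fun x : R => x ^ (p ^ i + 1) + x) 2 :=
  (degLE_gold p i).add ((degLE_addMonoidHom (AddMonoidHom.id R)).mono one_le_two)

theorem discreteDeriv_discreteDeriv_gold (u v w : R) :
    discreteDeriv u (discreteDeriv v (fun x : R => x ^ (p ^ i + 1))) w
      = u ^ p ^ i * v + u * v ^ p ^ i := by
  simp only [discreteDeriv, pow_succ, add_pow_expChar_pow]
  ring

end Gold

section GaloisFieldTwo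

variable {n : ℕ} (i : ℕ)

local notation "K" => GaloisField 2 n
local notation "Tr" => Algebra.trace (ZMod 2) (GaloisField 2 n)
local notation "σ" => FiniteField.frobeniusAlgEquivOfAlgebraic (ZMod 2) (GaloisField 2 n)

theorem trace_gold_add_self_periodic :
    Function.Periodic (fun x : K => Tr (x ^ (2 ^ i + 1) + x)) 1 := by
  intro x
  have h : (x + 1) ^ (2 ^ i + 1) + (x + 1) = (x ^ (2 ^ i + 1) + x) + (x ^ 2 ^ i + x) := by
    rw [pow_succ, add_pow_char_pow, one_pow]
    linear_combination (CharTwo.two_eq_zero : (2 : K) = 0)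
  simp only [h, map_add, trace_pow_prime_pow, CharTwo.add_self_eq_zero, add_zero]

theorem gold_add_self_sub_smul_one (c : ZMod 2) (x : K) :
    (x - c • 1) ^ (2 ^ i + 1) + (x - c • 1) = x ^ (2 ^ i + 1) + x + c • (x ^ 2 ^ i + x) := by
  obtain rfl | rfl : c = 0 ∨ c = 1 := by revert c; decide
  · simp
  · simp only [one_smul, pow_succ, sub_pow_char_pow, one_pow]
    linear_combination (-(x ^ 2 ^ i) - x) * (CharTwo.two_eq_zero : (2 : K) = 0)

theorem discreteDeriv_discreteDeriv_trace_gold_add_self (u v w : K) :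
    discreteDeriv u (discreteDeriv v (fun x : K => Tr (x ^ (2 ^ i + 1) + x))) w
      = Tr (u ^ 2 ^ i * v + u * v ^ 2 ^ i) := by
  have h := discreteDeriv_discreteDeriv_gold 2 i u v w
  simp only [discreteDeriv, ← map_sub] at h ⊢
  rw [← h]
  congr 1
  ring

theorem eq_zero_or_eq_one_of_pow_two_pow_add_self_eq_zero (hn : n ≠ 0) (hi : i.Coprime n)
    {x : K} (hx : x ^ 2 ^ i + x = 0) : x = 0 ∨ x = 1 := by
  rw [← GaloisField.finrank 2 hn] at hi
  have hfix := FiniteField.frobeniusAlgEquivOfAlgebraic_apply_eq_self_of_pow (ZMod 2) K hi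
    (x := x) (by rw [FiniteField.frobeniusAlgEquivOfAlgebraic_pow_apply, ← CharTwo.add_eq_zero, hx])
  rw [FiniteField.coe_frobeniusAlgEquivOfAlgebraic, ZMod.card] at hfix
  beta_reduce at hfix
  rw [sq] at hfix
  exact IsIdempotentElem.iff_eq_zero_or_one.1 hfix

theorem exists_trace_gold_polar_eq_one (hn : 3 ≤ n) (hi : i.Coprime n) :
    ∃ a b : K, Tr (a ^ 2 ^ i * b + a * b ^ 2 ^ i) = 1 := by
  have hndvd : ¬ Module.finrank (ZMod 2) K ∣ 2 * i := by
    rw [GaloisField.finrank 2 (by omega)]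
    intro hdvd
    have := Nat.le_of_dvd two_pos (hi.symm.dvd_of_dvd_mul_right hdvd)
    omega
  obtain ⟨a, ha⟩ := FiniteField.exists_frobeniusAlgEquivOfAlgebraic_pow_apply_ne (ZMod 2) K hndvd
  set τ := σ ^ i
  have hv : τ a + τ.symm a ≠ 0 := by
    intro h
    apply ha
    rw [mul_comm, pow_mul, sq, AlgEquiv.mul_apply, CharTwo.add_eq_zero.1 h,
      AlgEquiv.apply_symm_apply]
  have hτ : ∀ b, Tr (a * τ b) = Tr (τ.symm a * b) := fun b => by
    rw [← Algebra.trace_eq_of_algEquiv τ (τ.symm a * b), map_mul τ, AlgEquiv.apply_symm_apply]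
  obtain ⟨t, ht⟩ := Algebra.trace_surjective (ZMod 2) K 1
  refine ⟨a, (τ a + τ.symm a)⁻¹ * t, ?_⟩
  rw [← FiniteField.frobeniusAlgEquivOfAlgebraic_pow_apply,
    ← FiniteField.frobeniusAlgEquivOfAlgebraic_pow_apply, map_add, hτ, ← map_add, ← add_mul,
    mul_inv_cancel_left₀ hv, ht]

theorem CCZequiv_gold_twist : CCZequiv 2 n (fun x => x ^ (2 ^ i + 1))
    (fun x => x ^ (2 ^ i + 1) + x + Tr (x ^ (2 ^ i + 1) + x) • (x ^ 2 ^ i + x)) := by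
  have h := (CCZequiv_add_linearMap (fun x : K => x ^ (2 ^ i + 1)) LinearMap.id).trans
    (CCZequiv_comp_sub_smul _ Tr (trace_gold_add_self_periodic i))
  simpa only [LinearMap.id_apply, gold_add_self_sub_smul_one] using h

theorem degLE_three_gold_twist :
    degLE (fun x : K => x ^ (2 ^ i + 1) + x + Tr (x ^ (2 ^ i + 1) + x) • (x ^ 2 ^ i + x)) 3 := by
  have hF := degLE_gold_add_self (R := K) 2 i
  have hM : degLE (fun x : K => x ^ 2 ^ i + x) 1 :=
    (degLE_addMonoidHom (iterateFrobenius K 2 i).toAddMonoidHom).add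
      (degLE_addMonoidHom (AddMonoidHom.id K))
  exact hF.succ.add ((hF.map (Algebra.trace (ZMod 2) K).toAddMonoidHom).smul hM)

theorem not_degLE_two_gold_twist (hn : 4 ≤ n) (hi : i.Coprime n) :
    ¬ degLE (fun x : K => x ^ (2 ^ i + 1) + x + Tr (x ^ (2 ^ i + 1) + x) • (x ^ 2 ^ i + x)) 2 := by
  intro h
  classical
  let M : K →ₗ[ZMod 2] K := (σ ^ i).toLinearMap + LinearMap.id
  have hM : ∀ x, M x = x ^ 2 ^ i + x := fun x => by
    simp [M, FiniteField.frobeniusAlgEquivOfAlgebraic_pow_apply]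
  let B : K → K → ZMod 2 := fun u v => Tr (u ^ 2 ^ i * v + u * v ^ 2 ^ i)
  have hεM : degLE (fun x => Tr (x ^ (2 ^ i + 1) + x) • M x) 2 := by
    simpa [hM] using h.sub (degLE_gold_add_self 2 i)
  have hpolar : ∀ a b c, B b c • M a + B a c • M b + B a b • M c = 0 := fun a b c => by
    have h3 := (discreteDeriv_three_smul_zero (fun x : K => Tr (x ^ (2 ^ i + 1) + x))
      M.toAddMonoidHom a b c).symm.trans (hεM c b a 0)
    simp only [discreteDeriv_discreteDeriv_trace_gold_add_self] at h3
    exact h3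
  obtain ⟨a, b, hab⟩ := exists_trace_gold_polar_eq_one i (by omega) hi
  have hrange :
      LinearMap.range M ≤ Submodule.span (ZMod 2) (({M a, M b} : Finset K) : Set K) := by
    rintro _ ⟨c, rfl⟩
    have hc : M c = B b c • M a + B a c • M b := by
      have := hpolar a b c
      rw [show B a b = 1 from hab, one_smul] at this
      exact (CharTwo.add_eq_zero.1 this).symm
    rw [hc]
    exact add_mem (Submodule.smul_mem _ _ (Submodule.subset_span (by simp)))
      (Submodule.smul_mem _ _ (Submodule.subset_span (by simp)))
  have hker : LinearMap.ker M ≤ Submodule.span (ZMod 2) (({1} : Finset K) : Set K) := by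
    intro x hx
    rcases eq_zero_or_eq_one_of_pow_two_pow_add_self_eq_zero i (by omega) hi
      (by rwa [← hM]) with rfl | rfl
    · exact zero_mem _
    · exact Submodule.subset_span (by simp)
  have hle := M.finrank_le_of_range_le_span_of_ker_le_span hrange hker
  rw [GaloisField.finrank 2 (by omega)] at hle
  have := Finset.card_le_two (a := M a) (b := M b)
  simp only [Finset.card_singleton] at hle
  omega

end GaloisFieldTwo

theorem gold_binary_CCZ_not_EA_general
    (n i : ℕ) (hn : 4 ≤ n) (hi : Nat.gcd i n = 1) :
    CCZequiv 2 n (fun x => x ^ (2 ^ i + 1))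
      (fun x => x ^ (2 ^ i + 1) + x
        + Algebra.trace (ZMod 2) (GaloisField 2 n) (x ^ (2 ^ i + 1) + x)
            • (x ^ (2 ^ i) + x))
    ∧ degLE (fun x : GaloisField 2 n => x ^ (2 ^ i + 1) + x
        + Algebra.trace (ZMod 2) (GaloisField 2 n) (x ^ (2 ^ i + 1) + x)
            • (x ^ (2 ^ i) + x)) 3
    ∧ ¬ degLE (fun x : GaloisField 2 n => x ^ (2 ^ i + 1) + x
        + Algebra.trace (ZMod 2) (GaloisField 2 n) (x ^ (2 ^ i + 1) + x)
            • (x ^ (2 ^ i) + x)) 2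
    ∧ ¬ EAequiv 2 n (fun x => x ^ (2 ^ i + 1))
      (fun x => x ^ (2 ^ i + 1) + x
        + Algebra.trace (ZMod 2) (GaloisField 2 n) (x ^ (2 ^ i + 1) + x)
            • (x ^ (2 ^ i) + x)) := by
  have hnot2 := not_degLE_two_gold_twist i hn hi
  exact ⟨CCZequiv_gold_twist i, degLE_three_gold_twist i, hnot2,
    fun hEA => hnot2 ((degLE_gold 2 i).of_EAequiv hEA one_le_two)⟩

/-- For the Gold function `G(x) = x^{2^i+1}` with `gcd(i,n) = 1` and `n ≥ 4`, the cubic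
function `x^{2^i+1} + x + Tr(x^{2^i+1}+x)·(x^{2^i}+x)` is CCZ-equivalent but not
EA-equivalent to `G`. -/
theorem gold_binary_CCZ_not_EA
    (n i : ℕ) [Fact (Nat.Prime 2)] (hn : 4 ≤ n) (hi : Nat.gcd i n = 1) :
    CCZequiv 2 n (fun x => x ^ (2 ^ i + 1))
      (fun x => x ^ (2 ^ i + 1) + x
        + Algebra.trace (ZMod 2) (GaloisField 2 n) (x ^ (2 ^ i + 1) + x)
            • (x ^ (2 ^ i) + x))
    ∧ degLE (fun x : GaloisField 2 n => x ^ (2 ^ i + 1) + x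
        + Algebra.trace (ZMod 2) (GaloisField 2 n) (x ^ (2 ^ i + 1) + x)
            • (x ^ (2 ^ i) + x)) 3
    ∧ ¬ degLE (fun x : GaloisField 2 n => x ^ (2 ^ i + 1) + x
        + Algebra.trace (ZMod 2) (GaloisField 2 n) (x ^ (2 ^ i + 1) + x)
            • (x ^ (2 ^ i) + x)) 2
    ∧ ¬ EAequiv 2 n (fun x => x ^ (2 ^ i + 1))
      (fun x => x ^ (2 ^ i + 1) + x
        + Algebra.trace (ZMod 2) (GaloisField 2 n) (x ^ (2 ^ i + 1) + x)
            • (x ^ (2 ^ i) + x)) :=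
  gold_binary_CCZ_not_EA_general n i hn hi
end
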